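/- arXiv:2004.10625 — 3 statements merged into one kernel-verified Lean document; each statement's English description precedes it below -/
import Mathlib

section
/- (Sharpness of Theorem 3 in P^2.) Assume the characteristic of K is not 2. Let P_1 = X_0 and P_2 = X_0^2 + X_1^2 − X_2^2 in K[X_0, X_1, X_2]. Then: (a) the curves D_1 = {P_1 = 0} and D_2 = {P_2 = 0} are nonsingular and intersect transversally; (b) the tuple f(z) = (1, z, z) is a reduced representation of a non-constant analytic map from K to P^2(K) that omits both D_1 and D_2 (indeed P_1(f(z)) = 1 and P_2(f(z)) = 1 for all z). In particular, the degree hypothesis deg D_i ≥ 2 in Theorem 3 cannot be weakened. -/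
open MvPolynomial

/-- Sharpness of Theorem 3 in `P^2`: for `P₁ = X₀` and `P₂ = X₀² + X₁² - X₂²`
(char K ≠ 2), the curves `D₁ = {P₁ = 0}` and `D₂ = {P₂ = 0}` are nonsingular and
intersect transversally, and `f(z) = (1, z, z)` is a reduced representation of a
non-constant analytic map to `P²(K)` omitting both, with `P₁(f) = P₂(f) = 1`. -/
theorem sharpness_of_degree_hypothesis
    {K : Type*} [NontriviallyNormedField K] [CompleteSpace K] [IsAlgClosed K]
    [IsUltrametricDist K]
    (hchar : (2 : K) ≠ 0)
    (P₁ P₂ : MvPolynomial (Fin 3) K)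
    (hP₁ : P₁ = X 0)
    (hP₂ : P₂ = X 0 ^ 2 + X 1 ^ 2 - X 2 ^ 2)
    (f : Fin 3 → K → K)
    (hf : f = ![fun _ => 1, fun z => z, fun z => z]) :
    (∀ a : Fin 3 → K, a ≠ 0 → eval a P₁ = 0 → ∃ j, eval a (pderiv j P₁) ≠ 0) ∧
    (∀ a : Fin 3 → K, a ≠ 0 → eval a P₂ = 0 → ∃ j, eval a (pderiv j P₂) ≠ 0) ∧
    (∀ a : Fin 3 → K, a ≠ 0 → eval a P₁ = 0 → eval a P₂ = 0 →
      LinearIndependent K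
        ![fun j : Fin 3 => eval a (pderiv j P₁), fun j : Fin 3 => eval a (pderiv j P₂)]) ∧
    (∀ i, ∀ z : K, AnalyticAt K (f i) z) ∧
    (∀ z : K, ∃ i, f i z ≠ 0) ∧
    (¬ ∀ z w : K, ∃ c : K, c ≠ 0 ∧ ∀ i, f i z = c * f i w) ∧
    (∀ z : K, eval (fun i => f i z) P₁ = 1) ∧
    (∀ z : K, eval (fun i => f i z) P₂ = 1) := by
  subst hP₁ hP₂ hf
  refine ⟨?_, ?_, ?_, ?_, ?_, ?_, ?_, ?_⟩
  · intro a _ _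
    exact ⟨0, by simp [pderiv_X_self]⟩
  · intro a ha hev
    by_contra h
    push_neg at h
    have h0 := h 0
    have h1 := h 1
    have h2 := h 2
    simp [pderiv_X, Pi.single_apply] at h0 h1 h2
    apply ha
    funext j
    fin_cases j
    · exact h0.resolve_left hchar
    · exact h1.resolve_left hchar
    · exact h2.resolve_left hchar
  · intro a ha h1 h2
    have ha0 : a 0 = 0 := by simpa using h1
    rw [linearIndependent_fin2]
    constructor
    · simp only [Matrix.cons_val_one, Matrix.head_cons]
      intro hc
      apply ha
      have hc1 := congrFun hc 1
      have hc2 := congrFun hc 2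
      simp [pderiv_X, Pi.single_apply] at hc1 hc2
      funext j
      fin_cases j
      · exact ha0
      · exact hc1.resolve_left hchar
      · exact hc2.resolve_left hchar
    · intro c hc
      have := congrFun hc 0
      simp [pderiv_X, Pi.single_apply, ha0] at this
  · intro i z
    fin_cases i
    · exact analyticAt_const
    · exact analyticAt_id
    · exact analyticAt_id
  · intro z
    exact ⟨0, by simp⟩
  · intro h
    obtain ⟨c, hc, hci⟩ := h 1 0
    have h0 := hci 0
    have h1 := hci 1
    simp at h0 h1
  · intro z; simp
  · intro z
    simp [Matrix.vecHead, Matrix.vecTail]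
end

section
/- (Lemma 6(i), a line and a conic.) Let P_1 ∈ K[X_0, X_1, X_2] be a nonzero linear form defining a line D_1 in P^2(K), and let P_2 ∈ K[X_0, X_1, X_2] be homogeneous of degree 2 defining a nonsingular conic D_2. Then there exists a non-constant analytic map from K to P^2(K) omitting both D_1 and D_2; i.e., P^2(K) \ (D_1 ∪ D_2) is not K-hyperbolic. -/
open MvPolynomial

/-!
Pick a point `q` of `D₁ ∩ D₂` (a binary quadratic form over an algebraically closed field has a
nontrivial zero), a tangent direction `v` of `D₂` at `q` and a third vector `w`; nonsingularity of
`D₂` forces `Q v ≠ 0` and `polar Q q w ≠ 0`. If `D₁` is not the tangent line of `D₂` at `q`, the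
tangent line minus `q`, i.e. `z ↦ z q + v`, avoids both curves. If it is, the curve
`z ↦ α(z) q + z v + w` with `α` quadratic chosen so that `Q ≡ 1` along it avoids `D₂`, and it avoids
`D₁` since the linear form is the constant `L w ≠ 0` on it.

A homogeneous quadratic polynomial `P` is a quadratic form with polar form
`(x, y) ↦ ∑ⱼ yⱼ ∂ⱼP(x)`, through which the nonsingularity hypothesis is read.
-/

namespace MvPolynomial.IsHomogeneous

section CommSemiring

variable {σ R : Type*} [CommSemiring R] {P : MvPolynomial σ R}

theorem eval_smul {n : ℕ} (hP : P.IsHomogeneous n) (c : R) (x : σ → R) :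
    eval (c • x) P = c ^ n * eval x P := by
  induction hP using IsWeightedHomogeneous.induction_on with
  | zero => simp
  | add p q _ _ hp hq => simp [hp, hq, mul_add]
  | monomial d r hr =>
    simp only [eval_monomial, Pi.smul_apply, smul_eq_mul, mul_pow, Finsupp.prod_mul]
    rw [← hr, Finsupp.weight_apply, Finsupp.prod, Finset.prod_pow_eq_pow_sum]
    simp [Finsupp.sum]
    ring

variable [Fintype σ]

theorem eval_eq_sum_mul_eval_pderiv (hP : P.IsHomogeneous 1) (x y : σ → R) :
    eval y P = ∑ j, y j * eval x (pderiv j P) := by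
  classical
  rw [← mem_homogeneousSubmodule, homogeneousSubmodule_one_eq_span_X] at hP
  induction hP using Submodule.span_induction with
  | mem _ h =>
    obtain ⟨i, rfl⟩ := h
    simp [pderiv_X, Pi.single_apply]
  | zero => simp
  | add _ _ _ _ hp hq => simp [hp, hq, mul_add, Finset.sum_add_distrib]
  | smul c _ _ hp => simp [hp, Finset.mul_sum, mul_left_comm]

theorem eval_add_of_one (hP : P.IsHomogeneous 1) (x y : σ → R) :
    eval (x + y) P = eval x P + eval y P := by
  simp only [hP.eval_eq_sum_mul_eval_pderiv 0, Pi.add_apply, add_mul, Finset.sum_add_distrib]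

theorem eval_add_of_two (hP : P.IsHomogeneous 2) (x y : σ → R) :
    eval (x + y) P = eval x P + eval y P + ∑ j, y j * eval x (pderiv j P) := by
  rw [← mem_homogeneousSubmodule, ← homogeneousSubmodule_one_pow, pow_two] at hP
  refine Submodule.mul_induction_on hP (fun m hm n hn => ?_) (fun p q hp hq => ?_)
  · rw [mem_homogeneousSubmodule] at hm hn
    simp only [eval_mul, hm.eval_add_of_one, hn.eval_add_of_one,
      hm.eval_eq_sum_mul_eval_pderiv x y, hn.eval_eq_sum_mul_eval_pderiv x y, pderiv_mul,
      eval_add, mul_add, Finset.sum_add_distrib]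
    simp only [mul_left_comm (y _) (eval x m), ← Finset.mul_sum]
    simp only [← mul_assoc, ← Finset.sum_mul]
    ring
  · simp only [map_add, hp, hq, mul_add, Finset.sum_add_distrib]
    ring

noncomputable def evalLinearMap (hP : P.IsHomogeneous 1) : (σ → R) →ₗ[R] R where
  toFun x := eval x P
  map_add' := hP.eval_add_of_one
  map_smul' c x := by simp [hP.eval_smul]

@[simp]
theorem evalLinearMap_apply (hP : P.IsHomogeneous 1) (x : σ → R) :
    hP.evalLinearMap x = eval x P :=
  rfl

end CommSemiring

section CommRing

variable {σ R : Type*} [Fintype σ] [CommRing R] {P : MvPolynomial σ R}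

theorem polar_eval (hP : P.IsHomogeneous 2) (x y : σ → R) :
    QuadraticMap.polar (fun x => eval x P) x y = ∑ j, y j * eval x (pderiv j P) := by
  rw [QuadraticMap.polar, hP.eval_add_of_two]
  ring

noncomputable def evalQuadraticMap (hP : P.IsHomogeneous 2) : QuadraticMap R (σ → R) R :=
  have hP' (j : σ) : (pderiv j P).IsHomogeneous 1 := hP.pderiv
  .ofPolar (fun x => eval x P) (fun c x => by simp [hP.eval_smul, sq])
    (fun x x' y => by
      simp only [hP.polar_eval, (hP' _).eval_add_of_one, mul_add, Finset.sum_add_distrib])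
    (fun c x y => by
      simp only [hP.polar_eval, (hP' _).eval_smul, pow_one, smul_eq_mul, Finset.mul_sum,
        mul_left_comm (y _) c])

@[simp]
theorem evalQuadraticMap_apply (hP : P.IsHomogeneous 2) (x : σ → R) :
    hP.evalQuadraticMap x = eval x P :=
  rfl

theorem polar_evalQuadraticMap (hP : P.IsHomogeneous 2) (x y : σ → R) :
    QuadraticMap.polar hP.evalQuadraticMap x y = ∑ j, y j * eval x (pderiv j P) :=
  hP.polar_eval x y

end CommRing

end MvPolynomial.IsHomogeneous

theorem QuadraticMap.map_smul_add {R M : Type*} [CommRing R] [AddCommGroup M] [Module R M]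
    (Q : QuadraticForm R M) (a : R) (x y : M) :
    Q (a • x + y) = a * a * Q x + a * polar Q x y + Q y := by
  rw [QuadraticMap.map_add Q, Q.map_smul, polar_smul_left, smul_eq_mul, smul_eq_mul]
  ring

theorem LinearIndependent.eq_zero_of_triple {R M : Type*} [Ring R] [AddCommGroup M] [Module R M]
    {u v w : M} (h : LinearIndependent R ![u, v, w]) {a b c : R}
    (habc : a • u + b • v + c • w = 0) : a = 0 ∧ b = 0 ∧ c = 0 := by
  have := Fintype.linearIndependent_iff.mp h ![a, b, c] (by simpa [Fin.sum_univ_three] using habc)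
  exact ⟨this 0, this 1, this 2⟩

section

open Module QuadraticMap LinearMap

variable {K V : Type*} [Field K] [AddCommGroup V] [Module K V]

theorem Module.Dual.eq_zero_of_linearIndependent (hV : finrank K V = 3) {u v w : V}
    (huvw : LinearIndependent K ![u, v, w]) {f : Dual K V} (hu : f u = 0) (hv : f v = 0)
    (hw : f w = 0) : f = 0 := by
  refine (basisOfLinearIndependentOfCardEqFinrank huvw (by simp [hV])).ext fun i => ?_
  fin_cases i <;> simpa

theorem Module.Dual.one_lt_finrank_ker (hV : 2 < finrank K V) {f : Dual K V} (hf : f ≠ 0) :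
    1 < finrank K (ker f) := by
  have : FiniteDimensional K V := Module.finite_of_finrank_pos (by omega)
  have := f.finrank_ker_add_one_of_ne_zero hf
  omega

theorem Submodule.exists_linearIndependent_pair_of_mem {W : Submodule K V}
    (hW : 1 < finrank K W) {q : V} (hq : q ∈ W) (hq0 : q ≠ 0) :
    ∃ v ∈ W, LinearIndependent K ![q, v] := by
  have hq0' : (⟨q, hq⟩ : W) ≠ 0 := by simpa using hq0
  obtain ⟨v, hv⟩ := exists_linearIndependent_pair_of_one_lt_finrank hW hq0'
  refine ⟨v, v.2, (LinearIndependent.pair_iff' hq0).mpr fun a h => ?_⟩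
  exact (LinearIndependent.pair_iff' hq0').mp hv a (Subtype.ext h)

theorem QuadraticForm.exists_isotropic_mem [IsAlgClosed K] (Q : QuadraticForm K V)
    {W : Submodule K V} (hW : 1 < finrank K W) : ∃ q ∈ W, q ≠ 0 ∧ Q q = 0 := by
  have hW0 : W ≠ ⊥ := by
    rintro rfl
    simp at hW
  obtain ⟨x, hxW, hx0⟩ := Submodule.exists_mem_ne_zero_of_ne_bot hW0
  by_cases hQx : Q x = 0
  · exact ⟨x, hxW, hx0, hQx⟩
  obtain ⟨y, hyW, hxy⟩ := W.exists_linearIndependent_pair_of_mem hW hxW hx0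
  obtain ⟨r, hr⟩ := IsAlgClosed.exists_root
    (.C (Q x) * .X ^ 2 + .C (polar Q x y) * .X + .C (Q y) : Polynomial K)
    (by rw [Polynomial.degree_quadratic hQx]; decide)
  refine ⟨r • x + y, W.add_mem (W.smul_mem r hxW) hyW, fun h => ?_, ?_⟩
  · exact (LinearIndependent.pair_iff' hx0).mp hxy (-r) (by rwa [neg_smul, neg_eq_iff_add_eq_zero])
  · rw [map_smul_add]
    simp only [Polynomial.IsRoot, Polynomial.eval_add, Polynomial.eval_mul, Polynomial.eval_pow,
      Polynomial.eval_C, Polynomial.eval_X] at hr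
    linear_combination hr

variable {Q : QuadraticForm K V} {L : Dual K V} {q v w : V}

theorem apply_tangent_ne_zero (hV : finrank K V = 3)
    (hQ : ∀ x, x ≠ 0 → Q x = 0 → polarBilin Q x ≠ 0) (hqvw : LinearIndependent K ![q, v, w])
    (hQq : Q q = 0) (hqv : polar Q q v = 0) (hqw : polar Q q w ≠ 0) : Q v ≠ 0 := by
  intro hQv
  -- otherwise the line through `q` and `v` lies on the conic, and it has a singular point
  have hx0 : (-polar Q v w) • q + polar Q q w • v ≠ 0 := fun hx =>
    hqw (hqvw.eq_zero_of_triple (a := -polar Q v w) (c := 0) (by rwa [zero_smul, add_zero])).2.1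
  refine hQ _ hx0 ?_ (Dual.eq_zero_of_linearIndependent hV hqvw ?_ ?_ ?_)
  · rw [map_smul_add, Q.map_smul, polar_smul_right, hQq, hQv, hqv]
    simp
  all_goals
    simp only [polarBilin_apply_apply, polar_add_left, polar_smul_left, polar_self,
      polar_comm Q v q, hQq, hQv, hqv, smul_eq_mul]
    ring

theorem exists_curve_of_line_not_tangent (hli : LinearIndependent K ![q, v]) (hQq : Q q = 0)
    (hqv : polar Q q v = 0) (hQv : Q v ≠ 0) (hLq : L q = 0) (hLv : L v ≠ 0) :
    ∃ a b c : V, (∀ z : K, L (z ^ 2 • a + z • b + c) ≠ 0 ∧ Q (z ^ 2 • a + z • b + c) ≠ 0) ∧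
      LinearIndependent K ![c, a + b + c] := by
  refine ⟨0, q, v, fun z => ?_, ?_⟩
  · simp only [smul_zero, zero_add, map_add, map_smul, hLq, smul_eq_mul, mul_zero, map_smul_add,
      hQq, hqv]
    exact ⟨hLv, hQv⟩
  · rw [LinearIndependent.pair_iff] at hli ⊢
    intro s t h
    obtain ⟨ht, hst⟩ := hli t (s + t) (by rw [← h]; module)
    exact ⟨by linear_combination hst - ht, ht⟩

theorem exists_curve_of_line_tangent (hqvw : LinearIndependent K ![q, v, w]) (hQq : Q q = 0)
    (hqv : polar Q q v = 0) (hqw : polar Q q w ≠ 0) (hLq : L q = 0) (hLv : L v = 0)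
    (hLw : L w ≠ 0) :
    ∃ a b c : V, (∀ z : K, L (z ^ 2 • a + z • b + c) ≠ 0 ∧ Q (z ^ 2 • a + z • b + c) ≠ 0) ∧
      LinearIndependent K ![c, a + b + c] := by
  -- the coefficient of `q` is chosen so that `Q` is identically `1` along the curve
  have hcurve (z : K) : z ^ 2 • ((-Q v / polar Q q w) • q)
      + z • (v + (-polar Q v w / polar Q q w) • q) + (w + ((1 - Q w) / polar Q q w) • q)
      = ((1 - Q (z • v + w)) / polar Q q w) • q + (z • v + w) := by
    rw [map_smul_add]
    module
  refine ⟨(-Q v / polar Q q w) • q, v + (-polar Q v w / polar Q q w) • q,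
    w + ((1 - Q w) / polar Q q w) • q, fun z => ?_, ?_⟩
  · rw [hcurve]
    constructor
    · simpa [hLq, hLv] using hLw
    · rw [map_smul_add, hQq, polar_add_right, polar_smul_right, hqv]
      simp only [mul_zero, zero_add, smul_eq_mul]
      rw [div_mul_cancel₀ _ hqw, sub_add_cancel]
      exact one_ne_zero
  · rw [LinearIndependent.pair_iff]
    intro s t h
    obtain ⟨-, ht, hst⟩ := hqvw.eq_zero_of_triple (b := t) (c := s + t)
      (a := s * ((1 - Q w) / polar Q q w)
        + t * (-Q v / polar Q q w + -polar Q v w / polar Q q w + (1 - Q w) / polar Q q w))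
      (by rw [← h]; module)
    exact ⟨by linear_combination hst - ht, ht⟩

theorem exists_curve_avoiding_line_and_conic [IsAlgClosed K] (hV : finrank K V = 3)
    (hL : L ≠ 0) (hQ : ∀ x, x ≠ 0 → Q x = 0 → polarBilin Q x ≠ 0) :
    ∃ a b c : V, (∀ z : K, L (z ^ 2 • a + z • b + c) ≠ 0 ∧ Q (z ^ 2 • a + z • b + c) ≠ 0) ∧
      LinearIndependent K ![c, a + b + c] := by
  obtain ⟨q, hLq, hq0, hQq⟩ := Q.exists_isotropic_mem (Dual.one_lt_finrank_ker (by omega) hL)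
  have hqq : polarBilin Q q q = 0 := by simp [polar_self, hQq]
  obtain ⟨v, hqv, hli⟩ := Submodule.exists_linearIndependent_pair_of_mem
    (Dual.one_lt_finrank_ker (by omega) (hQ q hq0 hQq)) hqq hq0
  obtain ⟨w, hqvw⟩ := exists_linearIndependent_snoc_of_lt_finrank hli (by omega)
  have hsnoc : Fin.snoc ![q, v] w = ![q, v, w] := by
    ext i
    fin_cases i <;> rfl
  rw [hsnoc] at hqvw
  have hqw : polar Q q w ≠ 0 := fun h =>
    hQ q hq0 hQq (Dual.eq_zero_of_linearIndependent hV hqvw hqq hqv h)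
  by_cases hLv : L v = 0
  · exact exists_curve_of_line_tangent hqvw hQq hqv hqw hLq hLv fun h =>
      hL (Dual.eq_zero_of_linearIndependent hV hqvw hLq hLv h)
  · exact exists_curve_of_line_not_tangent hli hQq hqv
      (apply_tangent_ne_zero hV hQ hqvw hQq hqv hqw) hLq hLv

end

theorem line_and_conic_not_hyperbolic_general
    {K : Type*} [NontriviallyNormedField K] [IsAlgClosed K]
    (P₁ : MvPolynomial (Fin 3) K) (hP₁ : P₁.IsHomogeneous 1) (hP₁0 : P₁ ≠ 0)
    (P₂ : MvPolynomial (Fin 3) K) (hP₂ : P₂.IsHomogeneous 2)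
    (hns₂ : ∀ a : Fin 3 → K, a ≠ 0 → eval a P₂ = 0 →
      ∃ j, eval a (pderiv j P₂) ≠ 0) :
    ∃ f : Fin 3 → K → K,
      (∀ i, ∀ z : K, AnalyticAt K (f i) z) ∧
      (∀ z : K, ∃ i, f i z ≠ 0) ∧
      (∀ z : K, eval (fun i => f i z) P₁ ≠ 0) ∧
      (∀ z : K, eval (fun i => f i z) P₂ ≠ 0) ∧
      ¬ (∀ z w : K, ∃ c : K, c ≠ 0 ∧ ∀ i, f i z = c * f i w) := by
  have hL : hP₁.evalLinearMap ≠ 0 := fun h =>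
    hP₁0 (hP₁.eq_zero_of_forall_eval_eq_zero fun x => LinearMap.congr_fun h x)
  have hQ (x : Fin 3 → K) (hx0 : x ≠ 0) (hx : hP₂.evalQuadraticMap x = 0) :
      QuadraticMap.polarBilin hP₂.evalQuadraticMap x ≠ 0 := fun hpol => by
    obtain ⟨j, hj⟩ := hns₂ x hx0 hx
    exact hj (by simpa [IsHomogeneous.polar_evalQuadraticMap, Pi.single_apply] using
      LinearMap.congr_fun hpol (Pi.single j 1))
  obtain ⟨a, b, c, havoid, hli⟩ :=
    exists_curve_avoiding_line_and_conic (Module.finrank_fin_fun K) hL hQ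
  have hcurve (z : K) : (fun i => z ^ 2 * a i + z * b i + c i) = z ^ 2 • a + z • b + c := rfl
  refine ⟨fun i z => z ^ 2 * a i + z * b i + c i, fun i z => by fun_prop, fun z => ?_,
    fun z => by simpa [hcurve] using (havoid z).1, fun z => by simpa [hcurve] using (havoid z).2,
    fun hconst => ?_⟩
  · by_contra! h
    exact (havoid z).1 (by rw [show z ^ 2 • a + z • b + c = 0 from funext h, map_zero])
  · obtain ⟨μ, -, hμ⟩ := hconst 1 0
    exact (LinearIndependent.pair_iff' (hli.ne_zero 0)).mp hli μ
      (funext fun i => by simpa using (hμ i).symm)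

/-- Lemma 6(i), a line and a conic: the complement in `P²(K)` of a line and a
nonsingular conic is not `K`-hyperbolic. -/
theorem line_and_conic_not_hyperbolic
    {K : Type*} [NontriviallyNormedField K] [CompleteSpace K] [IsAlgClosed K]
    [IsUltrametricDist K]
    (P₁ : MvPolynomial (Fin 3) K) (hP₁ : P₁.IsHomogeneous 1) (hP₁0 : P₁ ≠ 0)
    (P₂ : MvPolynomial (Fin 3) K) (hP₂ : P₂.IsHomogeneous 2)
    (hns₂ : ∀ a : Fin 3 → K, a ≠ 0 → eval a P₂ = 0 →
      ∃ j, eval a (pderiv j P₂) ≠ 0) :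
    ∃ f : Fin 3 → K → K,
      (∀ i, ∀ z : K, AnalyticAt K (f i) z) ∧
      (∀ z : K, ∃ i, f i z ≠ 0) ∧
      (∀ z : K, eval (fun i => f i z) P₁ ≠ 0) ∧
      (∀ z : K, eval (fun i => f i z) P₂ ≠ 0) ∧
      ¬ (∀ z w : K, ∃ c : K, c ≠ 0 ∧ ∀ i, f i z = c * f i w) :=
  line_and_conic_not_hyperbolic_general P₁ hP₁ hP₁0 P₂ hP₂ hns₂
end

section
/- (Theorem 4, non-hyperbolicity at a maximal inflexion point.) Let P_2 ∈ K[X_0, X_1, X_2] be homogeneous of degree d ≥ 3 with D_2 = {P_2 = 0} nonsingular, and let a nonzero p ∈ K^3 with P_2(p) = 0 represent a maximal inflexion point of D_2, realized by the line L through p with direction v (so v ∈ K^3 is not a scalar multiple of p and P_2(p + t·v) = c·t^d for some nonzero c ∈ K). Let P_1 ∈ K[X_0, X_1, X_2] be a nonzero linear form with P_1(p) = 0 and P_1(v) ≠ 0 (so the line D_1 = {P_1 = 0} passes through p but is different from L). Then there exists a non-constant analytic map from K to P^2(K) omitting both D_1 and D_2; i.e., P^2(K) \ (D_1 ∪ D_2)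 is not K-hyperbolic. -/
/-!
The map `z ↦ z • p + v`, i.e. the affine line `L` with its point at infinity `p` removed, already
works. Homogeneity turns `P₂(p + t • v) = c t ^ d` into `P₂(z • p + v) = c` for `z ≠ 0`, and by
continuity also for `z = 0`; the linear form `P₁` vanishes at `p`, so it is the constant
`P₁(v) ≠ 0` along the line. Comparing the values of `P₁` at `z = 0` and `z = 1` shows that the map
is not constant in `P²`.
-/

open MvPolynomial

namespace MvPolynomial

section Homogeneous

variable {σ R : Type*} [CommSemiring R] {φ : MvPolynomial σ R}

theorem IsHomogeneous.eval_smul_s15 {n : ℕ} (hφ : φ.IsHomogeneous n) (s : R) (x : σ → R) :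
    eval (s • x) φ = s ^ n * eval x φ := by
  rw [eval_eq, eval_eq, Finset.mul_sum]
  refine Finset.sum_congr rfl fun d hd => ?_
  simp only [Pi.smul_apply, smul_eq_mul, mul_pow, Finset.prod_mul_distrib,
    Finset.prod_pow_eq_pow_sum, ← hφ.degree_eq_sum_deg_support hd]
  ring

theorem IsHomogeneous.eval_smul_add_of_one (hφ : φ.IsHomogeneous 1) (s : R) (x y : σ → R) :
    eval (s • x + y) φ = s * eval x φ + eval y φ := by
  have hspan : φ ∈ Submodule.span R (Set.range X) := by
    rw [← homogeneousSubmodule_one_eq_span_X, mem_homogeneousSubmodule]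
    exact hφ
  clear hφ
  induction hspan using Submodule.span_induction with
  | mem _ hX =>
    obtain ⟨i, rfl⟩ := hX
    simp
  | zero => simp
  | add _ _ _ _ hψ hχ => simp only [map_add, hψ, hχ]; ring
  | smul r _ _ hψ => simp only [smul_eval, hψ]; ring

end Homogeneous

theorem eval_aeval_C_add_C_mul_X {σ R : Type*} [CommRing R] (P : MvPolynomial σ R)
    (p v : σ → R) (t : R) :
    (aeval (fun i => Polynomial.C (p i) + Polynomial.C (v i) * Polynomial.X) P).eval t =
      eval (p + t • v) P := by
  induction P using MvPolynomial.induction_on with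
  | C a => simp
  | add f g hf hg => simp [hf, hg]
  | mul_X f i hf => simp [hf, mul_comm t]

theorem IsHomogeneous.eval_smul_add_eq_of_eval_add_smul {K : Type*} [NontriviallyNormedField K]
    {σ : Type*} {P : MvPolynomial σ K} {d : ℕ} (hP : P.IsHomogeneous d) {p v : σ → K} {c : K}
    (hline : ∀ t : K, eval (p + t • v) P = c * t ^ d) (z : K) :
    eval (z • p + v) P = c := by
  have hoff : Set.EqOn (fun z : K => eval (z • p + v) P) (fun _ => c) {0}ᶜ := by
    intro z (hz : z ≠ 0)
    have hscale : z • p + v = z • (p + z⁻¹ • v) := by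
      rw [smul_add, smul_smul, mul_inv_cancel₀ hz, one_smul]
    simp only [hscale, hP.eval_smul_s15, hline, inv_pow]
    field_simp
  have hcont : Continuous fun z : K => eval (z • p + v) P :=
    (continuous_eval P).comp (by fun_prop)
  exact congrFun (hcont.ext_on (dense_compl_singleton 0) continuous_const hoff) z

end MvPolynomial

theorem maximal_inflexion_not_hyperbolic_general
    {K : Type*} [NontriviallyNormedField K]
    (d : ℕ)
    (P₂ : MvPolynomial (Fin 3) K) (hP₂ : P₂.IsHomogeneous d)
    (p : Fin 3 → K) (hp : p ≠ 0)
    (v : Fin 3 → K) (hv : ¬ ∃ s : K, v = s • p)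
    (c : K) (hc : c ≠ 0)
    (hinfl : MvPolynomial.aeval
        (fun i => Polynomial.C (p i) + Polynomial.C (v i) * Polynomial.X) P₂
        = Polynomial.C c * Polynomial.X ^ d)
    (P₁ : MvPolynomial (Fin 3) K) (hP₁ : P₁.IsHomogeneous 1)
    (hP₁p : eval p P₁ = 0) (hP₁v : eval v P₁ ≠ 0) :
    ∃ f : Fin 3 → K → K,
      (∀ i, ∀ z : K, AnalyticAt K (f i) z) ∧
      (∀ z : K, ∃ i, f i z ≠ 0) ∧
      (∀ z : K, eval (fun i => f i z) P₁ ≠ 0) ∧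
      (∀ z : K, eval (fun i => f i z) P₂ ≠ 0) ∧
      ¬ (∀ z w : K, ∃ c : K, c ≠ 0 ∧ ∀ i, f i z = c * f i w) := by
  have hline (t : K) : eval (p + t • v) P₂ = c * t ^ d := by
    simpa [eval_aeval_C_add_C_mul_X] using congrArg (Polynomial.eval t) hinfl
  have hP₁line (z : K) : eval (z • p + v) P₁ = eval v P₁ := by
    simp [hP₁.eval_smul_add_of_one, hP₁p]
  refine ⟨fun i z => (z • p + v) i, fun i z => ?_, fun z => ?_, fun z => ?_, fun z => ?_, ?_⟩
  · simp only [Pi.add_apply, Pi.smul_apply, smul_eq_mul]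
    fun_prop
  · by_contra! hzero
    exact hv ⟨-z, by rw [neg_smul, eq_neg_iff_add_eq_zero, add_comm]; exact funext hzero⟩
  · exact hP₁line z ▸ hP₁v
  · exact hP₂.eval_smul_add_eq_of_eval_add_smul hline z ▸ hc
  · rintro hconst
    obtain ⟨μ, -, hμ⟩ := hconst 0 1
    have hv_eq : v = μ • (p + v) := funext fun i => by simpa using hμ i
    have hμ_one : μ = 1 := by
      have hP₁μ : eval v P₁ = μ * eval v P₁ :=
        calc eval v P₁ = eval (μ • (p + v)) P₁ := congrArg (eval · P₁) hv_eq
          _ = μ * eval ((1 : K) • p + v) P₁ := by rw [hP₁.eval_smul_s15, pow_one, one_smul]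
          _ = μ * eval v P₁ := by rw [hP₁line]
      exact (mul_eq_right₀ hP₁v).mp hP₁μ.symm
    exact hp (by simpa [hμ_one] using hv_eq)

/-- Theorem 4, non-hyperbolicity at a maximal inflexion point: if a line `D₁`
passes through a maximal inflexion point of a nonsingular curve `D₂` of degree
`d ≥ 3` and differs from the maximal inflexion line, then `P²(K) \ (D₁ ∪ D₂)` is
not `K`-hyperbolic. -/
theorem maximal_inflexion_not_hyperbolic
    {K : Type*} [NontriviallyNormedField K] [CompleteSpace K] [IsAlgClosed K]
    [IsUltrametricDist K]
    (d : ℕ) (hd : 3 ≤ d)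
    (P₂ : MvPolynomial (Fin 3) K) (hP₂ : P₂.IsHomogeneous d)
    (hns₂ : ∀ a : Fin 3 → K, a ≠ 0 → eval a P₂ = 0 →
      ∃ j, eval a (pderiv j P₂) ≠ 0)
    (p : Fin 3 → K) (hp : p ≠ 0) (hp₂ : eval p P₂ = 0)
    (v : Fin 3 → K) (hv : ¬ ∃ s : K, v = s • p)
    (c : K) (hc : c ≠ 0)
    (hinfl : MvPolynomial.aeval
        (fun i => Polynomial.C (p i) + Polynomial.C (v i) * Polynomial.X) P₂
        = Polynomial.C c * Polynomial.X ^ d)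
    (P₁ : MvPolynomial (Fin 3) K) (hP₁ : P₁.IsHomogeneous 1) (hP₁0 : P₁ ≠ 0)
    (hP₁p : eval p P₁ = 0) (hP₁v : eval v P₁ ≠ 0) :
    ∃ f : Fin 3 → K → K,
      (∀ i, ∀ z : K, AnalyticAt K (f i) z) ∧
      (∀ z : K, ∃ i, f i z ≠ 0) ∧
      (∀ z : K, eval (fun i => f i z) P₁ ≠ 0) ∧
      (∀ z : K, eval (fun i => f i z) P₂ ≠ 0) ∧
      ¬ (∀ z w : K, ∃ c : K, c ≠ 0 ∧ ∀ i, f i z = c * f i w) :=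
  maximal_inflexion_not_hyperbolic_general d P₂ hP₂ p hp v hv c hc hinfl P₁ hP₁ hP₁p hP₁v
end
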